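/- arXiv:2202.06261 — 2 statements merged into one kernel-verified Lean document; each statement's English description precedes it below -/
import Mathlib

section
/- The ν-gap quantity used for SISO or MIMO systems is symmetric at the level of the defining coprime-factor expression: for normalized coprime factorizations, ‖ -Ñ₂ M₁ + M̃₂ N₁ ‖_∞ = ‖ -Ñ₁ M₂ + M̃₁ N₂ ‖_∞. -/
open Matrix
open scoped Matrix.Norms.L2Operator

private lemma star_key {R : Type*} [Ring R] [StarRing R]
    (M₁ N₁ M₂ N₂ Nl₂ Ml₂ : R)
    (hr₁ : star N₁ * N₁ + star M₁ * M₁ = 1)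
    (e1 : M₂ * star M₂ + star Nl₂ * Nl₂ = 1)
    (e2 : star Nl₂ * Ml₂ = M₂ * star N₂)
    (e3 : N₂ * star N₂ + star Ml₂ * Ml₂ = 1) :
    star (-Nl₂ * M₁ + Ml₂ * N₁) * (-Nl₂ * M₁ + Ml₂ * N₁)
      + star (star M₂ * M₁ + star N₂ * N₁) * (star M₂ * M₁ + star N₂ * N₁) = 1 := by
  have e2' : star Ml₂ * Nl₂ = N₂ * star M₂ := by
    have := congrArg star e2
    simpa [StarMul.star_mul] using this
  calc star (-Nl₂ * M₁ + Ml₂ * N₁) * (-Nl₂ * M₁ + Ml₂ * N₁)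
      + star (star M₂ * M₁ + star N₂ * N₁) * (star M₂ * M₁ + star N₂ * N₁)
      = star M₁ * (M₂ * star M₂ + star Nl₂ * Nl₂) * M₁
        + star N₁ * (N₂ * star N₂ + star Ml₂ * Ml₂) * N₁
        + star M₁ * (M₂ * star N₂ - star Nl₂ * Ml₂) * N₁
        + star N₁ * (N₂ * star M₂ - star Ml₂ * Nl₂) * M₁ := by
        simp only [star_add, StarMul.star_mul, star_neg, star_star]
        noncomm_ring
    _ = 1 := by
        rw [e1, e2, e2', e3]
        simp only [sub_self, mul_zero, zero_mul, mul_one, add_zero]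
        rw [add_comm (star M₁ * M₁)]
        exact hr₁

private lemma nu_flip {n : ℕ} (N M Nl Ml : Matrix (Fin n) (Fin n) ℂ)
    (hr : Nᴴ * N + Mᴴ * M = 1) (hl : Nl * Nlᴴ + Ml * Mlᴴ = 1) (hc : Ml * N = Nl * M) :
    M * Mᴴ + Nlᴴ * Nl = 1 ∧ Nlᴴ * Ml = M * Nᴴ ∧ N * Nᴴ + Mlᴴ * Ml = 1 := by
  have hcT : Nᴴ * Mlᴴ = Mᴴ * Nlᴴ := by
    have := congrArg conjTranspose hc
    simpa [conjTranspose_mul] using this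
  have h1 : (fromBlocks M (-Nlᴴ) N Mlᴴ)ᴴ * (fromBlocks M (-Nlᴴ) N Mlᴴ) = 1 := by
    rw [fromBlocks_conjTranspose, fromBlocks_multiply, ← fromBlocks_one, fromBlocks_inj]
    refine ⟨?_, ?_, ?_, ?_⟩
    · rw [add_comm]; exact hr
    · simp [mul_neg, hcT]
    · simp [neg_mul, hc]
    · simpa [neg_mul, mul_neg] using hl
  have h2 := mul_eq_one_comm.mp h1
  rw [fromBlocks_conjTranspose, fromBlocks_multiply, ← fromBlocks_one, fromBlocks_inj] at h2
  obtain ⟨b11, b12, b21, b22⟩ := h2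
  refine ⟨?_, ?_, ?_⟩
  · simpa [neg_mul, mul_neg] using b11
  · have hb : M * Nᴴ - Nlᴴ * Ml = 0 := by
      simpa [neg_mul, mul_neg, sub_eq_add_neg] using b12
    exact (sub_eq_zero.mp hb).symm
  · simpa using b22

private lemma spec_mul_comm {n : ℕ} (C D : Matrix (Fin n) (Fin n) ℂ) :
    spectrum ℂ (C * D) = spectrum ℂ (D * C) := by
  ext z
  by_cases hz : z = 0
  · subst hz
    simp [spectrum.zero_mem_iff, Matrix.isUnit_iff_isUnit_det, Matrix.det_mul,
      mul_comm (C.det) (D.det)]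
    tauto
  · have h : spectrum ℂ (C * D) \ {0} = spectrum ℂ (D * C) \ {0} :=
      spectrum.nonzero_mul_comm C D
    constructor <;> intro hm
    · have h' : z ∈ spectrum ℂ (C * D) \ {0} := ⟨hm, hz⟩
      rw [h] at h'; exact h'.1
    · have h' : z ∈ spectrum ℂ (D * C) \ {0} := ⟨hm, hz⟩
      rw [← h] at h'; exact h'.1

noncomputable instance matrixCStarAlgebra {n : ℕ} : CStarAlgebra (Matrix (Fin n) (Fin n) ℂ) :=
  { Matrix.instL2OpNormedRing, (inferInstance : StarRing (Matrix (Fin n) (Fin n) ℂ)),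
    (inferInstance : CompleteSpace (Matrix (Fin n) (Fin n) ℂ)),
    Matrix.instCStarRing, Matrix.instL2OpNormedAlgebra,
    (inferInstance : StarModule ℂ (Matrix (Fin n) (Fin n) ℂ)) with }

private lemma norm_eq_of_spec {n : ℕ} (X Y : Matrix (Fin n) (Fin n) ℂ)
    (hX : IsSelfAdjoint X) (hY : IsSelfAdjoint Y)
    (h : spectrum ℂ X = spectrum ℂ Y) : ‖X‖ = ‖Y‖ := by
  have hx := hX.spectralRadius_eq_nnnorm
  have hy := hY.spectralRadius_eq_nnnorm
  rw [spectralRadius, h, ← spectralRadius, hy] at hx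
  have h2 : ‖Y‖₊ = ‖X‖₊ := by exact_mod_cast hx
  calc ‖X‖ = (‖X‖₊ : ℝ) := (coe_nnnorm X).symm
    _ = (‖Y‖₊ : ℝ) := by rw [h2]
    _ = ‖Y‖ := coe_nnnorm Y

/-- Symmetry of the ν-gap defining expression: if `P₁` and `P₂` have
normalized right coprime factors `(Nᵢ, Mᵢ)` and normalized left coprime
factors `(Nlᵢ, Mlᵢ)` (frequency-wise on the imaginary axis, parameterized by
`ω`), with the left/right factorizations describing the same plant
(`Mlᵢ Nᵢ = Nlᵢ Mᵢ`), then the H∞ norms (suprema over `ω` of the L²-operator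
norm) of `-Nl₂ M₁ + Ml₂ N₁` and `-Nl₁ M₂ + Ml₁ N₂` coincide. -/
theorem nu_gap_expression_symmetric (n : ℕ)
    (N₁ M₁ N₂ M₂ Nl₁ Ml₁ Nl₂ Ml₂ : ℝ → Matrix (Fin n) (Fin n) ℂ)
    (hr₁ : ∀ ω, (N₁ ω)ᴴ * N₁ ω + (M₁ ω)ᴴ * M₁ ω = 1)
    (hr₂ : ∀ ω, (N₂ ω)ᴴ * N₂ ω + (M₂ ω)ᴴ * M₂ ω = 1)
    (hl₁ : ∀ ω, Nl₁ ω * (Nl₁ ω)ᴴ + Ml₁ ω * (Ml₁ ω)ᴴ = 1)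
    (hl₂ : ∀ ω, Nl₂ ω * (Nl₂ ω)ᴴ + Ml₂ ω * (Ml₂ ω)ᴴ = 1)
    (hc₁ : ∀ ω, Ml₁ ω * N₁ ω = Nl₁ ω * M₁ ω)
    (hc₂ : ∀ ω, Ml₂ ω * N₂ ω = Nl₂ ω * M₂ ω) :
    (⨆ ω : ℝ, ‖-(Nl₂ ω) * M₁ ω + Ml₂ ω * N₁ ω‖) =
      ⨆ ω : ℝ, ‖-(Nl₁ ω) * M₂ ω + Ml₁ ω * N₂ ω‖ := by
  refine iSup_congr fun ω => ?_
  obtain ⟨f1a, f1b, f1c⟩ := nu_flip (N₁ ω) (M₁ ω) (Nl₁ ω) (Ml₁ ω) (hr₁ ω) (hl₁ ω) (hc₁ ω)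
  obtain ⟨f2a, f2b, f2c⟩ := nu_flip (N₂ ω) (M₂ ω) (Nl₂ ω) (Ml₂ ω) (hr₂ ω) (hl₂ ω) (hc₂ ω)
  set A := -(Nl₂ ω) * M₁ ω + Ml₂ ω * N₁ ω with hA
  set B := -(Nl₁ ω) * M₂ ω + Ml₁ ω * N₂ ω with hB
  set C := (M₂ ω)ᴴ * M₁ ω + (N₂ ω)ᴴ * N₁ ω with hC
  have key1 : Aᴴ * A = 1 - Cᴴ * C := by
    refine eq_sub_of_add_eq ?_
    have := star_key (M₁ ω) (N₁ ω) (M₂ ω) (N₂ ω) (Nl₂ ω) (Ml₂ ω)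
      (by simpa [Matrix.star_eq_conjTranspose] using hr₁ ω)
      (by simpa [Matrix.star_eq_conjTranspose] using f2a)
      (by simpa [Matrix.star_eq_conjTranspose] using f2b)
      (by simpa [Matrix.star_eq_conjTranspose] using f2c)
    simpa [Matrix.star_eq_conjTranspose, hA, hC] using this
  have hCt : (M₁ ω)ᴴ * M₂ ω + (N₁ ω)ᴴ * N₂ ω = Cᴴ := by
    rw [hC]
    simp [conjTranspose_add, conjTranspose_mul]
  have key2 : Bᴴ * B = 1 - C * Cᴴ := by
    refine eq_sub_of_add_eq ?_
    have := star_key (M₂ ω) (N₂ ω) (M₁ ω) (N₁ ω) (Nl₁ ω) (Ml₁ ω)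
      (by simpa [Matrix.star_eq_conjTranspose] using hr₂ ω)
      (by simpa [Matrix.star_eq_conjTranspose] using f1a)
      (by simpa [Matrix.star_eq_conjTranspose] using f1b)
      (by simpa [Matrix.star_eq_conjTranspose] using f1c)
    simp only [Matrix.star_eq_conjTranspose] at this
    rw [← hB, hCt] at this
    simpa [conjTranspose_conjTranspose] using this
  have hspec : spectrum ℂ (Aᴴ * A) = spectrum ℂ (Bᴴ * B) := by
    rw [key1, key2,
      show (1 : Matrix (Fin n) (Fin n) ℂ) = algebraMap ℂ _ 1 from (_root_.map_one _).symm,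
      ← spectrum.singleton_sub_eq, ← spectrum.singleton_sub_eq, spec_mul_comm]
  have hsaA : IsSelfAdjoint (Aᴴ * A) := by
    simpa [Matrix.star_eq_conjTranspose] using IsSelfAdjoint.star_mul_self A
  have hsaB : IsSelfAdjoint (Bᴴ * B) := by
    simpa [Matrix.star_eq_conjTranspose] using IsSelfAdjoint.star_mul_self B
  have hn := norm_eq_of_spec _ _ hsaA hsaB hspec
  have ha : ‖Aᴴ * A‖ = ‖A‖ * ‖A‖ := by
    simpa [Matrix.star_eq_conjTranspose] using CStarRing.norm_star_mul_self (x := A)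
  have hb : ‖Bᴴ * B‖ = ‖B‖ * ‖B‖ := by
    simpa [Matrix.star_eq_conjTranspose] using CStarRing.norm_star_mul_self (x := B)
  have h2 : ‖A‖ * ‖A‖ = ‖B‖ * ‖B‖ := by rw [← ha, ← hb, hn]
  exact (mul_self_inj_of_nonneg (norm_nonneg _) (norm_nonneg _)).mp h2
end

section
/- If all the eigenvalues of the matrices A + λ B K (for λ ranging over the nonzero Laplacian eigenvalues) lie in the open left half-plane, then for the closed-loop consensus dynamics ẋ = (I_N ⊗ A + L ⊗ BK) x on a connected graph, the pairwise differences x_i − x_j converge to zero for all agents i, j. -/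
/-!
Diagonalise the symmetric Laplacian by an orthonormal eigenbasis `u_k`, `L u_k = λ_k u_k`.
Writing the stacked state as `x = vec X`, the identity `(P ⊗ Q) vec X = vec (Q X Pᵀ)` shows that
the mode `y_k = X u_k` obeys `y_k' = (A + λ_k BK) y_k`, so for `λ_k ≠ 0` it is
`exp (t (A + λ_k BK)) y_k(0) → 0`. This decay comes from Gelfand's formula: `exp M` is a polynomial
in `M`, so its eigenvalues are the `e^μ` for eigenvalues `μ` of `M`, all inside the unit disc, hence
`(exp M)^n → 0`. Eigenvectors with `λ_k = 0` are constant on the connected graph, hence orthogonal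
to `e_i - e_j`, so the expansion of `x_i - x_j = X (e_i - e_j)` in the eigenbasis involves only
decaying modes.
-/

open Matrix Filter NormedSpace Topology
open Polynomial (aeval)
open scoped Kronecker

theorem tendsto_pow_atTop_nhds_zero_of_spectralRadius_lt_one {A : Type*} [NormedRing A]
    [NormedAlgebra ℂ A] [CompleteSpace A] {a : A} (ha : spectralRadius ℂ a < 1) :
    Tendsto (fun n : ℕ => a ^ n) atTop (𝓝 0) := by
  obtain ⟨r, hr0, hρr, hr1⟩ := ENNReal.lt_iff_exists_real_btwn.1 ha
  have hr1 : r < 1 := by simpa using (ENNReal.ofReal_lt_one).1 hr1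
  refine squeeze_zero_norm' ?_ (tendsto_pow_atTop_nhds_zero_of_lt_one hr0 hr1)
  filter_upwards [(spectrum.pow_norm_pow_one_div_tendsto_nhds_spectralRadius a).eventually_lt_const
    hρr, eventually_ge_atTop 1] with n hn hn1
  rw [ENNReal.ofReal_lt_ofReal_iff_of_nonneg (by positivity), one_div,
    Real.rpow_inv_lt_iff_of_pos (norm_nonneg _) hr0 (by positivity), Real.rpow_natCast] at hn
  exact hn.le

theorem tendsto_exp_smul_atTop_nhds_zero {A : Type*} [NormedRing A] [NormedAlgebra ℚ A]
    [NormedAlgebra ℝ A] [CompleteSpace A] {a : A}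
    (ha : Tendsto (fun n : ℕ => exp a ^ n) atTop (𝓝 0)) :
    Tendsto (fun t : ℝ => exp (t • a)) atTop (𝓝 0) := by
  obtain ⟨C, hC⟩ : ∃ C, ∀ s ∈ Set.Icc (0 : ℝ) 1, ‖exp (s • a)‖ ≤ C :=
    isCompact_Icc.exists_bound_of_continuousOn
      (exp_continuous.comp (continuous_id.smul continuous_const)).continuousOn
  have hfloor : Tendsto (fun t : ℝ => ‖exp a ^ ⌊t⌋₊‖ * C) atTop (𝓝 0) := by
    simpa using ((tendsto_norm_zero.comp ha).comp tendsto_nat_floor_atTop).mul_const C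
  refine squeeze_zero_norm' ?_ hfloor
  filter_upwards [eventually_ge_atTop 0] with t ht
  have hfrac : t - ⌊t⌋₊ ∈ Set.Icc (0 : ℝ) 1 :=
    ⟨sub_nonneg.2 (Nat.floor_le ht), by linarith [Nat.lt_floor_add_one t]⟩
  have hsplit : exp (t • a) = exp a ^ ⌊t⌋₊ * exp ((t - ⌊t⌋₊) • a) := by
    rw [← NormedSpace.exp_nsmul, ← Nat.cast_smul_eq_nsmul ℝ, ← NormedSpace.exp_add_of_commute
      (((Commute.refl a).smul_left _).smul_right _), ← add_smul, add_sub_cancel]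
  rw [hsplit]
  exact (norm_mul_le _ _).trans (mul_le_mul_of_nonneg_left (hC _ hfrac) (norm_nonneg _))

theorem NormedSpace.exp_mem_adjoin_singleton {𝕂 A : Type*} [RCLike 𝕂] [NormedRing A]
    [NormedAlgebra 𝕂 A] [FiniteDimensional 𝕂 A] (a : A) :
    exp a ∈ Algebra.adjoin 𝕂 {a} := by
  have : CompleteSpace A := FiniteDimensional.complete 𝕂 A
  let S := Subalgebra.toSubmodule (Algebra.adjoin 𝕂 {a})
  exact S.closed_of_finiteDimensional.mem_of_tendsto
    (exp_series_hasSum_exp' (𝕂 := 𝕂) a).tendsto_sum_nat (Eventually.of_forall fun n =>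
      S.sum_mem fun k _ => S.smul_mem _ (pow_mem (Algebra.self_mem_adjoin_singleton 𝕂 a) k))

namespace Matrix

section Exponential

variable {ι 𝕂 : Type*} [Fintype ι] [DecidableEq ι]

def IsHurwitz (M : Matrix ι ι ℝ) : Prop :=
  ∀ z ∈ spectrum ℂ (M.map Complex.ofReal), z.re < 0

attribute [local instance] Matrix.linftyOpNormedAddCommGroup Matrix.linftyOpNormedSpace
  Matrix.linftyOpNormedRing Matrix.linftyOpNormedAlgebra

theorem pow_mulVec_of_mulVec_eq_smul [CommSemiring 𝕂] {M : Matrix ι ι 𝕂} {μ : 𝕂} {v : ι → 𝕂}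
    (hv : M *ᵥ v = μ • v) (k : ℕ) : (M ^ k) *ᵥ v = μ ^ k • v := by
  induction k with
  | zero => simp
  | succ k ih => rw [pow_succ', ← mulVec_mulVec, ih, mulVec_smul, hv, smul_smul, pow_succ]

theorem exp_mulVec_of_mulVec_eq_smul [RCLike 𝕂] {M : Matrix ι ι 𝕂} {μ : 𝕂} {v : ι → 𝕂}
    (hv : M *ᵥ v = μ • v) : exp M *ᵥ v = exp μ • v := by
  have hM := (exp_series_hasSum_exp' (𝕂 := 𝕂) M).map (mulVec.addMonoidHomLeft v)
    (continuous_id.matrix_mulVec continuous_const)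
  have hμ := (exp_series_hasSum_exp' (𝕂 := 𝕂) μ).smul_const v
  simp only [Function.comp_def, mulVec.addMonoidHomLeft, AddMonoidHom.coe_mk, ZeroHom.coe_mk,
    smul_mulVec, pow_mulVec_of_mulVec_eq_smul hv, smul_smul] at hM
  exact hM.unique hμ

theorem spectrum_exp_subset [Nonempty ι] (M : Matrix ι ι ℂ) :
    spectrum ℂ (exp M) ⊆ Complex.exp '' spectrum ℂ M := by
  obtain ⟨p, hp⟩ : ∃ p : Polynomial ℂ, aeval M p = exp M := by
    rw [← AlgHom.mem_range, ← Algebra.adjoin_singleton_eq_range_aeval]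
    exact exp_mem_adjoin_singleton (𝕂 := ℂ) M
  rw [← hp, spectrum.map_polynomial_aeval]
  rintro _ ⟨μ, hμ, rfl⟩
  obtain ⟨v, hv⟩ := (Module.End.hasEigenvalue_iff_mem_spectrum.2
    ((AlgEquiv.spectrum_eq toLinAlgEquiv' M).symm ▸ hμ)).exists_hasEigenvector
  have hMv : M *ᵥ v = μ • v := by simpa using hv.apply_eq_smul
  have hp_v : aeval M p *ᵥ v = p.eval μ • v := by
    rw [← toLinAlgEquiv'_apply, ← Polynomial.aeval_algHom_apply]
    exact Module.End.aeval_apply_of_hasEigenvector hv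
  refine ⟨μ, hμ, smul_left_injective ℂ hv.2 ?_⟩
  change Complex.exp μ • v = p.eval μ • v
  rw [Complex.exp_eq_exp_ℂ, ← exp_mulVec_of_mulVec_eq_smul hMv, ← hp_v, hp]

theorem spectralRadius_exp_lt_one [Nonempty ι] {M : Matrix ι ι ℂ}
    (hM : ∀ z ∈ spectrum ℂ M, z.re < 0) : spectralRadius ℂ (exp M) < 1 := by
  refine spectrum.spectralRadius_lt_of_forall_lt (r := 1) _ fun w hw => ?_
  obtain ⟨μ, hμ, rfl⟩ := spectrum_exp_subset M hw
  rw [← NNReal.coe_lt_coe, coe_nnnorm, Complex.norm_exp, NNReal.coe_one, Real.exp_lt_one_iff]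
  exact hM μ hμ

theorem tendsto_exp_smul_atTop_nhds_zero_of_re_neg {M : Matrix ι ι ℂ}
    (hM : ∀ z ∈ spectrum ℂ M, z.re < 0) : Tendsto (fun t : ℝ => exp (t • M)) atTop (𝓝 0) := by
  cases isEmpty_or_nonempty ι
  · exact tendsto_const_nhds.congr fun _ => Subsingleton.elim _ _
  exact tendsto_exp_smul_atTop_nhds_zero
    (tendsto_pow_atTop_nhds_zero_of_spectralRadius_lt_one (spectralRadius_exp_lt_one hM))

theorem IsHurwitz.tendsto_exp_smul {M : Matrix ι ι ℝ} (hM : M.IsHurwitz) :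
    Tendsto (fun t : ℝ => exp (t • M)) atTop (𝓝 0) := by
  have hexp (t : ℝ) : (exp (t • M)).map Complex.ofReal = exp (t • M.map Complex.ofReal) := by
    have := map_exp (Complex.ofRealHom.mapMatrix (m := ι))
      (continuous_id.matrix_map Complex.continuous_ofReal) (t • M)
    have hmap : (t • M).map Complex.ofRealHom = t • M.map Complex.ofReal := by ext; simp
    rwa [RingHom.mapMatrix_apply, RingHom.mapMatrix_apply, hmap] at this
  have hre := ((continuous_id.matrix_map Complex.continuous_re).tendsto 0).comp
    (tendsto_exp_smul_atTop_nhds_zero_of_re_neg hM)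
  simpa [Function.comp_def, ← hexp] using hre

theorem eq_exp_smul_mulVec_of_hasDerivAt {M : Matrix ι ι ℝ} {y : ℝ → ι → ℝ}
    (hy : ∀ t, HasDerivAt y (M *ᵥ y t) t) (t : ℝ) : y t = exp (t • M) *ᵥ y 0 := by
  let mulVecInit : Matrix ι ι ℝ →L[ℝ] ι → ℝ :=
    ((LinearMap.applyₗ (y 0)).comp (toLin' (m := ι) (n := ι) (R := ℝ)).toLinearMap)
      |>.toContinuousLinearMap
  have hexp (t : ℝ) :
      HasDerivAt (fun t => exp (t • M) *ᵥ y 0) (M *ᵥ (exp (t • M) *ᵥ y 0)) t := by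
    rw [mulVec_mulVec]
    exact mulVecInit.hasFDerivAt.comp_hasDerivAt t (hasDerivAt_exp_smul_const' M t)
  refine congrFun (ODE_solution_unique_univ (v := fun _ => (M *ᵥ ·)) (s := fun _ => Set.univ)
    (t₀ := 0) (fun _ => (mulVecLin M).toContinuousLinearMap.lipschitz.lipschitzOnWith)
    (fun t => ⟨hy t, trivial⟩) (fun t => ⟨hexp t, trivial⟩) (by simp)) t

theorem IsHurwitz.tendsto_of_hasDerivAt_mulVec {M : Matrix ι ι ℝ} (hM : M.IsHurwitz)
    {y : ℝ → ι → ℝ} (hy : ∀ t, HasDerivAt y (M *ᵥ y t) t) : Tendsto y atTop (𝓝 0) := by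
  rw [funext (eq_exp_smul_mulVec_of_hasDerivAt hy)]
  simpa [Function.comp_def] using
    ((continuous_id.matrix_mulVec continuous_const).tendsto 0).comp hM.tendsto_exp_smul

end Exponential

section Unvec

variable {ι κ R : Type*}

/-- The inverse of `Matrix.vec`: the `i`-th column of `unvec w` is the block `w (i, ·)`. -/
def unvec (w : ι × κ → R) : Matrix κ ι R := of fun k i => w (i, k)

theorem unvec_add [Add R] (w w' : ι × κ → R) : unvec (w + w') = unvec w + unvec w' := rfl

theorem unvec_mulVec_single_one [Fintype ι] [DecidableEq ι] [NonAssocSemiring R]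
    (w : ι × κ → R) (i : ι) : unvec w *ᵥ Pi.single i 1 = fun k => w (i, k) := by
  rw [mulVec_single_one]
  rfl

theorem unvec_kronecker_mulVec [Fintype ι] [Fintype κ] [CommSemiring R] (P : Matrix ι ι R)
    (Q : Matrix κ κ R) (w : ι × κ → R) : unvec ((P ⊗ₖ Q) *ᵥ w) = Q * unvec w * Pᵀ :=
  vec_inj.1 (kronecker_mulVec_vec Q (unvec w) P)

theorem unvec_mulVec_of_vecMul_eq_smul [Fintype ι] [Fintype κ] [DecidableEq ι] [CommSemiring R]
    {L : Matrix ι ι R} {u : ι → R} {μ : R} (hu : u ᵥ* L = μ • u) (A C : Matrix κ κ R)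
    (w : ι × κ → R) :
    unvec ((1 ⊗ₖ A + L ⊗ₖ C) *ᵥ w) *ᵥ u = (A + μ • C) *ᵥ (unvec w *ᵥ u) :=
  calc unvec ((1 ⊗ₖ A + L ⊗ₖ C) *ᵥ w) *ᵥ u
      = (A * unvec w + C * unvec w * Lᵀ) *ᵥ u := by
        rw [add_mulVec, unvec_add, unvec_kronecker_mulVec, unvec_kronecker_mulVec, transpose_one,
          Matrix.mul_one]
    _ = A *ᵥ (unvec w *ᵥ u) + C *ᵥ (unvec w *ᵥ (u ᵥ* L)) := by
        simp only [add_mulVec, ← mulVec_mulVec, mulVec_transpose]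
    _ = (A + μ • C) *ᵥ (unvec w *ᵥ u) := by
        rw [hu, mulVec_smul, mulVec_smul, add_mulVec, smul_mulVec]

theorem _root_.HasDerivAt.unvec_mulVec [Fintype ι] {x : ℝ → ι × κ → ℝ} {x' : ι × κ → ℝ}
    {t : ℝ} (hx : HasDerivAt x x' t) (u : ι → ℝ) :
    HasDerivAt (fun t => unvec (x t) *ᵥ u) (unvec x' *ᵥ u) t := by
  refine hasDerivAt_pi.2 fun k => HasDerivAt.fun_sum fun i _ => ?_
  exact (hasDerivAt_pi.1 hx (i, k)).mul_const (u i)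

theorem tendsto_unvec_mulVec_of_vecMul_eq_smul [Fintype ι] [Fintype κ] [DecidableEq ι]
    [DecidableEq κ] {L : Matrix ι ι ℝ} {u : ι → ℝ} {μ : ℝ} (hu : u ᵥ* L = μ • u)
    {A C : Matrix κ κ ℝ} (hAC : (A + μ • C).IsHurwitz)
    {x : ℝ → ι × κ → ℝ} (hx : ∀ t, HasDerivAt x ((1 ⊗ₖ A + L ⊗ₖ C) *ᵥ x t) t) :
    Tendsto (fun t => unvec (x t) *ᵥ u) atTop (𝓝 0) :=
  hAC.tendsto_of_hasDerivAt_mulVec fun t => by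
    simpa only [unvec_mulVec_of_vecMul_eq_smul hu] using (hx t).unvec_mulVec u

end Unvec

end Matrix

theorem OrthonormalBasis.sum_dotProduct_smul_ofLp {ι : Type*} [Fintype ι]
    (b : OrthonormalBasis ι ℝ (EuclideanSpace ℝ ι)) (v : ι → ℝ) :
    ∑ k, (v ⬝ᵥ ⇑(b k)) • ⇑(b k) = v := by
  simpa [EuclideanSpace.inner_eq_star_dotProduct, WithLp.ofLp_sum, dotProduct_comm] using
    congrArg WithLp.ofLp (b.sum_repr' (WithLp.toLp 2 v))

/-- If, for every nonzero Laplacian eigenvalue `μ` of a connected undirected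
simple graph, the matrix `A + μ B K` is Hurwitz (all its complex eigenvalues
lie in the open left half-plane), then every solution of the closed-loop
consensus dynamics `ẋ = (I_N ⊗ A + L ⊗ BK) x` achieves consensus: all
pairwise differences `x_i - x_j` of agent states converge to zero. -/
theorem hurwitz_modes_implies_consensus (N n m : ℕ)
    (G : SimpleGraph (Fin N)) [DecidableRel G.Adj] (hG : G.Connected)
    (A : Matrix (Fin n) (Fin n) ℝ) (B : Matrix (Fin n) (Fin m) ℝ)
    (K : Matrix (Fin m) (Fin n) ℝ)
    (hHurwitz : ∀ μ ∈ spectrum ℝ (G.lapMatrix ℝ), μ ≠ 0 →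
      ∀ z ∈ spectrum ℂ ((A + μ • (B * K)).map Complex.ofReal), z.re < 0)
    (x : ℝ → (Fin N × Fin n → ℝ))
    (hx : ∀ t : ℝ, HasDerivAt x
      (((1 : Matrix (Fin N) (Fin N) ℝ) ⊗ₖ A + (G.lapMatrix ℝ) ⊗ₖ (B * K))
        *ᵥ (x t)) t) :
    ∀ i j : Fin N,
      Tendsto (fun t : ℝ => (fun k : Fin n => x t (i, k) - x t (j, k)))
        atTop (nhds 0) := by
  intro i j
  have hL : (G.lapMatrix ℝ).IsHermitian := G.isHermitian_lapMatrix ℝ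
  set u := hL.eigenvectorBasis
  set d : Fin N → ℝ := Pi.single i 1 - Pi.single j 1 with hd
  have hu (k : Fin N) : ⇑(u k) ᵥ* G.lapMatrix ℝ = hL.eigenvalues k • ⇑(u k) := by
    rw [← mulVec_transpose, (G.isSymm_lapMatrix ℝ).eq, hL.mulVec_eigenvectorBasis]
  have hmode (k : Fin N) :
      Tendsto (fun t => (d ⬝ᵥ ⇑(u k)) • (unvec (x t) *ᵥ ⇑(u k))) atTop (𝓝 0) := by
    by_cases hk : hL.eigenvalues k = 0
    · have : u k i = u k j := G.lapMatrix_mulVec_eq_zero_iff_forall_reachable.1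
        (by rw [hL.mulVec_eigenvectorBasis, hk, zero_smul]) i j (hG.preconnected i j)
      simp [hd, this]
    · simpa only [smul_zero] using (tendsto_unvec_mulVec_of_vecMul_eq_smul (hu k)
        (hHurwitz _ (hL.eigenvalues_mem_spectrum_real k) hk) hx).const_smul (d ⬝ᵥ ⇑(u k))
  have hsplit (t : ℝ) :
      (fun k => x t (i, k) - x t (j, k)) = ∑ k, (d ⬝ᵥ ⇑(u k)) • (unvec (x t) *ᵥ ⇑(u k)) :=
    calc (fun k => x t (i, k) - x t (j, k))
        = unvec (x t) *ᵥ d := by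
          rw [hd, mulVec_sub, unvec_mulVec_single_one, unvec_mulVec_single_one]
          rfl
      _ = unvec (x t) *ᵥ ∑ k, (d ⬝ᵥ ⇑(u k)) • ⇑(u k) := by rw [u.sum_dotProduct_smul_ofLp]
      _ = _ := by simp only [mulVec_sum, mulVec_smul]
  simpa only [← hsplit, Finset.sum_const_zero] using
    tendsto_finsetSum Finset.univ fun k _ => hmode k
end
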